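/- Under the assumptions of Proposition 2: let H1 be an m1×n zero-one matrix with protograph S1 of size Sm1×Sn (i.e., row types A_j partition {1,...,m1}, column types B_v partition {1,...,n}, and for every row ℓ of type A_j and every column type B_v, the number of i ∈ B_v with H1(ℓ,i)=1 equals S1(j,v)); let H12 be an m2×m1 zero-one matrix with protograph S12 of size Sm2×Sm1 whose column-type partition coincides with the row-type partition of H1; and assume no variable-node elimination (rows of H1 combined in any row of H12 have pairwise disjoint supports). Then H2 = H12·H1 (over GF(2)) has protograph S2 = S12·S1, the product taken over the integers: for every row ℓ of H2 of type A_i and every column type B_v, the number of columns u ∈ B_v with H2(ℓ,u)=1 equals the (i,v) entry of the integer matrix product S12·S1. -/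
import Mathlib


/-- Proposition 2: Suppose the zero-one matrix H1 has protograph
S1 with respect to the row-type map tA1 and column-type map tB, the zero-one
matrix H12 has protograph S12 with respect to row-type map tA2 and whose
column-type partition coincides with the row-type partition of H1 (column-type
map tA1), and there is no variable-node elimination. Then H2 = H12·H1 over
GF(2) has protograph S12·S1 (integer matrix product), with row types inherited
from H12 and column types from H1. -/
theorem stmt_6 (m1 m2 n Sm1 Sm2 Sn : ℕ)
    (H1 : Matrix (Fin m1) (Fin n) ℕ)
    (H12 : Matrix (Fin m2) (Fin m1) ℕ)
    (S1 : Matrix (Fin Sm1) (Fin Sn) ℕ)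
    (S12 : Matrix (Fin Sm2) (Fin Sm1) ℕ)
    (tA1 : Fin m1 → Fin Sm1) (tB : Fin n → Fin Sn) (tA2 : Fin m2 → Fin Sm2)
    (h1_01 : ∀ k i, H1 k i = 0 ∨ H1 k i = 1)
    (h12_01 : ∀ l k, H12 l k = 0 ∨ H12 l k = 1)
    (hproto1 : ∀ (k : Fin m1) (v : Fin Sn),
      (Finset.univ.filter (fun i : Fin n => tB i = v ∧ H1 k i = 1)).card
        = S1 (tA1 k) v)
    (hproto12 : ∀ (l : Fin m2) (j : Fin Sm1),
      (Finset.univ.filter (fun k : Fin m1 => tA1 k = j ∧ H12 l k = 1)).card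
        = S12 (tA2 l) j)
    (hdisj : ∀ (l : Fin m2) (k1 k2 : Fin m1), k1 ≠ k2 →
      H12 l k1 = 1 → H12 l k2 = 1 → ∀ i : Fin n, H1 k1 i * H1 k2 i = 0) :
    ∀ (l : Fin m2) (v : Fin Sn),
      (Finset.univ.filter (fun u : Fin n => tB u = v ∧
        ((H12.map (Nat.cast : ℕ → ZMod 2)) * (H1.map (Nat.cast : ℕ → ZMod 2))) l u
          = 1)).card
        = (S12 * S1) (tA2 l) v := by
  intro l v
  set N : Fin n → ℕ := fun u => ∑ k, H12 l k * H1 k u with hNdef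
  have hN : ∀ u, N u =
      (Finset.univ.filter (fun k : Fin m1 => H12 l k = 1 ∧ H1 k u = 1)).card := by
    intro u
    rw [Finset.card_filter]
    apply Finset.sum_congr rfl
    intro k _
    rcases h12_01 l k with h | h <;> rcases h1_01 k u with h' | h' <;>
      simp [h, h']
  have hNle : ∀ u, N u ≤ 1 := by
    intro u
    rw [hN u]
    apply Finset.card_le_one.mpr
    intro k1 hk1 k2 hk2
    simp only [Finset.mem_filter] at hk1 hk2
    by_contra hne
    have := hdisj l k1 k2 hne hk1.2.1 hk2.2.1 u
    rw [hk1.2.2, hk2.2.2] at this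
    simp at this
  have hentry : ∀ u, (((H12.map (Nat.cast : ℕ → ZMod 2)) *
      (H1.map (Nat.cast : ℕ → ZMod 2))) l u = 1 ↔ N u = 1) := by
    intro u
    have hcast : ((H12.map (Nat.cast : ℕ → ZMod 2)) *
        (H1.map (Nat.cast : ℕ → ZMod 2))) l u = ((N u : ℕ) : ZMod 2) := by
      simp [Matrix.mul_apply, Matrix.map_apply, hNdef, Nat.cast_sum]
    rw [hcast]
    rcases Nat.le_one_iff_eq_zero_or_eq_one.mp (hNle u) with h | h <;> rw [h]
    · simp only [Nat.cast_zero]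
      constructor
      · intro h0; exact absurd h0.symm one_ne_zero
      · intro h0; exact absurd h0 zero_ne_one
    · simp
  -- rewrite the filter condition
  have hfilter : (Finset.univ.filter (fun u : Fin n => tB u = v ∧
        ((H12.map (Nat.cast : ℕ → ZMod 2)) * (H1.map (Nat.cast : ℕ → ZMod 2))) l u
          = 1)).card
      = ∑ u : Fin n, if tB u = v then N u else 0 := by
    rw [Finset.card_filter]
    apply Finset.sum_congr rfl
    intro u _
    by_cases hv : tB u = v
    · have := hNle u
      rcases Nat.le_one_iff_eq_zero_or_eq_one.mp this with h | h
      · simp [hv, hentry u, h]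
      · simp [hv, hentry u, h]
    · simp [hv]
  rw [hfilter]
  have step1 : ∀ k : Fin m1,
      (∑ u : Fin n, if tB u = v then H1 k u else 0) = S1 (tA1 k) v := by
    intro k
    rw [← hproto1 k v, Finset.card_filter]
    apply Finset.sum_congr rfl
    intro u _
    rcases h1_01 k u with h | h <;> by_cases hv : tB u = v <;> simp [h, hv]
  have step2 : (∑ u : Fin n, if tB u = v then N u else 0)
      = ∑ k : Fin m1, H12 l k * S1 (tA1 k) v := by
    have e1 : (∑ u : Fin n, if tB u = v then N u else 0)
        = ∑ u : Fin n, ∑ k : Fin m1, if tB u = v then H12 l k * H1 k u else 0 := by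
      apply Finset.sum_congr rfl
      intro u _
      by_cases hv : tB u = v <;> simp [hv, hNdef]
    rw [e1, Finset.sum_comm]
    apply Finset.sum_congr rfl
    intro k _
    rw [← step1 k, Finset.mul_sum]
    apply Finset.sum_congr rfl
    intro u _
    by_cases hv : tB u = v <;> simp [hv]
  rw [step2, Matrix.mul_apply,
    ← Finset.sum_fiberwise Finset.univ tA1 (fun k => H12 l k * S1 (tA1 k) v)]
  apply Finset.sum_congr rfl
  intro j _
  rw [← hproto12 l j, Finset.card_filter, Finset.sum_filter, Finset.sum_mul]
  apply Finset.sum_congr rfl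
  intro k _
  rcases h12_01 l k with h | h <;> by_cases hj : tA1 k = j <;> simp [h, hj]
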